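/- arXiv:2006.12562 — 2 statements merged into one kernel-verified Lean document; each statement's English description precedes it below -/
import Mathlib

section
/- For any graph G with n vertices and maximum independent set size α, and any 0 ≤ k ≤ α, the number of independent sets of size k satisfies i_k ≤ C(α,k) · (n/α)^k. -/
open Finset

def IsIndepFinset {V : Type*} (G : SimpleGraph V) (s : Finset V) : Prop :=
  ∀ a ∈ s, ∀ b ∈ s, ¬ G.Adj a b

open Classical in
noncomputable def indepCount {V : Type*} [Fintype V] (G : SimpleGraph V) (k : ℕ) : ℕ :=
  (Finset.univ.filter fun s : Finset V => s.card = k ∧ IsIndepFinset G s).card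

/-!
Weight the vertices by `x ≥ 0` and count each independent `k`-set with the product of its
weights. While two adjacent vertices `a, b` both carry weight, no independent set contains both,
so the weighted count is affine in the amount of weight moved between `a` and `b`; moving all of
it to one of them does not decrease the count and shrinks the support. Once the support is
independent it has at most `α` vertices, so it lies in an `α`-set `s`, and the weighted count is
at most the elementary symmetric polynomial `e_k` of the weights on `s`. Maclaurin's inequality
`e_k ≤ C(α, k) (e_1 / α) ^ k` finishes; unit weights give the theorem. Maclaurin's inequality
itself follows by induction on the number of variables from `e_{k+1}(y, a) = e_{k+1}(y) + a e_k(y)`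
and the tangent-line bound `u ^ (k+1) + (k+1) u ^ k (w - u) ≤ w ^ (k+1)`.
-/

open Function

section Maclaurin

lemma pow_succ_add_mul_sub_le {R : Type*} [CommRing R] [LinearOrder R] [IsStrictOrderedRing R]
    {u w : R} (hu : 0 ≤ u) (hw : 0 ≤ w) (k : ℕ) :
    u ^ (k + 1) + (k + 1) * u ^ k * (w - u) ≤ w ^ (k + 1) := by
  induction k with
  | zero => simp
  | succ k ih =>
    have hsq : 0 ≤ (k + 1 : R) * u ^ k * (w - u) ^ 2 := by positivity
    push_cast
    linear_combination mul_le_mul_of_nonneg_left ih hw + hsq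

lemma choose_mul_pow_add_le {R : Type*} [CommRing R] [LinearOrder R] [IsStrictOrderedRing R]
    {u z w : R} (hu : 0 ≤ u) (hw : 0 ≤ w) {m : ℕ} (hmean : (m + 1) * w = m * u + z) (k : ℕ) :
    m.choose (k + 1) * u ^ (k + 1) + m.choose k * u ^ k * z ≤
      (m + 1).choose (k + 1) * w ^ (k + 1) := by
  have hchoose : ((m + 1).choose (k + 1) : R) * (k + 1) = (m + 1) * m.choose k := by
    exact_mod_cast (Nat.add_one_mul_choose_eq m k).symm
  have hpascal : ((m + 1).choose (k + 1) : R) = m.choose k + m.choose (k + 1) := by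
    exact_mod_cast Nat.choose_succ_succ' m k
  linear_combination mul_le_mul_of_nonneg_left (pow_succ_add_mul_sub_le hu hw k)
      (Nat.cast_nonneg (α := R) ((m + 1).choose (k + 1)))
    - u ^ (k + 1) * hpascal - u ^ k * (w - u) * hchoose - (m.choose k : R) * u ^ k * hmean

lemma Multiset.esymm_cons_succ {R : Type*} [CommSemiring R] (a : R) (s : Multiset R) (k : ℕ) :
    (a ::ₘ s).esymm (k + 1) = s.esymm (k + 1) + a * s.esymm k := by
  simp [Multiset.esymm, Multiset.powersetCard_cons, Multiset.map_map, Multiset.sum_map_mul_left]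

variable {R : Type*} [Field R] [LinearOrder R] [IsStrictOrderedRing R]

theorem Multiset.esymm_le_choose_mul_pow (s : Multiset R) (hs : ∀ a ∈ s, 0 ≤ a) (k : ℕ) :
    s.esymm k ≤ (card s).choose k * (s.sum / card s) ^ k := by
  induction s using Multiset.induction_on generalizing k with
  | empty => cases k <;> simp [Multiset.esymm, Multiset.powersetCard_zero_right]
  | cons a s ih =>
    cases k with
    | zero => simp [Multiset.esymm]
    | succ k =>
      have hs' : ∀ b ∈ s, 0 ≤ b := fun b hb => hs b (Multiset.mem_cons_of_mem hb)
      have ha : 0 ≤ a := hs a (Multiset.mem_cons_self a s)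
      have hmean : (card s + 1 : R) * ((a ::ₘ s).sum / card (a ::ₘ s)) =
          card s * (s.sum / card s) + a := by
        rcases eq_or_ne s 0 with rfl | hs0
        · simp
        · have : (card s : R) ≠ 0 := by simpa using hs0
          simp only [Multiset.sum_cons, Multiset.card_cons, Nat.cast_add, Nat.cast_one]
          field_simp
          ring
      have hw := choose_mul_pow_add_le (div_nonneg (Multiset.sum_nonneg hs') (by positivity))
        (div_nonneg (Multiset.sum_nonneg hs) (by positivity)) hmean k
      rw [← Multiset.card_cons a s] at hw
      calc (a ::ₘ s).esymm (k + 1) = s.esymm (k + 1) + a * s.esymm k :=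
            Multiset.esymm_cons_succ a s k
        _ ≤ (card s).choose (k + 1) * (s.sum / card s) ^ (k + 1)
            + (card s).choose k * (s.sum / card s) ^ k * a := by
          rw [mul_comm a]
          exact add_le_add (ih hs' (k + 1)) (mul_le_mul_of_nonneg_right (ih hs' k) ha)
        _ ≤ _ := hw

theorem Finset.sum_powersetCard_prod_le_choose_mul_pow {ι : Type*} (s : Finset ι) {y : ι → R}
    (hy : ∀ i ∈ s, 0 ≤ y i) (k : ℕ) :
    ∑ A ∈ s.powersetCard k, ∏ i ∈ A, y i ≤ (#s).choose k * ((∑ i ∈ s, y i) / #s) ^ k := by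
  simpa [Finset.esymm_map_val] using
    (s.val.map y).esymm_le_choose_mul_pow (by simpa using hy) k

end Maclaurin

section WeightShifting

variable {R V : Type*} [DecidableEq V]

def shiftWeight [Add R] [Zero R] (x : V → R) (a b : V) : V → R :=
  update (update x a (x a + x b)) b 0

section AddCommMonoid

variable [AddCommMonoid R] {x : V → R} {a b v : V}

lemma shiftWeight_apply_left (hab : a ≠ b) : shiftWeight x a b a = x a + x b := by
  simp [shiftWeight, hab]

lemma shiftWeight_apply_right : shiftWeight x a b b = 0 :=
  update_self ..

lemma shiftWeight_apply_of_ne (hva : v ≠ a) (hvb : v ≠ b) : shiftWeight x a b v = x v := by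
  simp [shiftWeight, hva, hvb]

lemma shiftWeight_nonneg [PartialOrder R] [IsOrderedAddMonoid R] (hx : ∀ v, 0 ≤ x v)
    (a b v : V) : 0 ≤ shiftWeight x a b v := by
  rcases eq_or_ne v b with rfl | hvb
  · rw [shiftWeight_apply_right]
  rcases eq_or_ne v a with rfl | hva
  · rw [shiftWeight_apply_left hvb]; exact add_nonneg (hx v) (hx b)
  · rw [shiftWeight_apply_of_ne hva hvb]; exact hx v

variable [Fintype V]

lemma sum_shiftWeight (hab : a ≠ b) : ∑ v, shiftWeight x a b v = ∑ v, x v := by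
  have ha : a ∈ univ.erase b := mem_erase.2 ⟨hab, mem_univ a⟩
  rw [shiftWeight, sum_update_of_mem (mem_univ b), sum_update_of_mem (by simpa using hab),
    ← add_sum_erase _ _ (mem_univ b), ← add_sum_erase _ _ ha]
  simp only [sdiff_singleton_eq_erase, zero_add]
  abel

lemma card_support_shiftWeight_lt [DecidableEq R] (hab : a ≠ b) (ha : x a ≠ 0) (hb : x b ≠ 0) :
    #{v | shiftWeight x a b v ≠ 0} < #{v | x v ≠ 0} := by
  refine card_lt_card ((ssubset_iff_of_subset fun v hv => ?_).2
    ⟨b, by simpa using hb, by simp [shiftWeight_apply_right]⟩)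
  simp only [mem_filter, mem_univ, true_and] at hv ⊢
  rcases eq_or_ne v a with rfl | hva
  · exact ha
  · have hvb : v ≠ b := by rintro rfl; exact hv shiftWeight_apply_right
    rwa [shiftWeight_apply_of_ne hva hvb] at hv

end AddCommMonoid

lemma sum_prod_update_update [CommSemiring R] {F : Finset (Finset V)} {a b : V}
    (hF : ∀ S ∈ F, a ∈ S → b ∉ S) (x : V → R) (p q : R) :
    ∑ S ∈ F, ∏ v ∈ S, update (update x a p) b q v =
      ∑ S ∈ F with a ∉ S ∧ b ∉ S, ∏ v ∈ S, x v
        + p * ∑ S ∈ F with a ∈ S, ∏ v ∈ S.erase a, x v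
        + q * ∑ S ∈ F with b ∈ S, ∏ v ∈ S.erase b, x v := by
  simp only [sum_filter, mul_sum, ← sum_add_distrib]
  refine sum_congr rfl fun S hS => ?_
  by_cases ha : a ∈ S
  · have hb := hF S hS ha
    rw [prod_update_of_notMem hb, prod_update_of_mem ha, sdiff_singleton_eq_erase]
    simp [ha, hb]
  · by_cases hb : b ∈ S
    · rw [prod_update_of_mem hb, sdiff_singleton_eq_erase,
        prod_update_of_notMem (fun h => ha (mem_of_mem_erase h))]
      simp [ha, hb]
    · rw [prod_update_of_notMem hb, prod_update_of_notMem ha]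
      simp [ha, hb]

/-- When no member of `F` contains both `a` and `b`, the weighted count of `F` is affine along
the segment `x a + x b = const`, so it is maximised at one of the two endpoints. -/
lemma sum_prod_le_shiftWeight_or [CommRing R] [LinearOrder R] [IsStrictOrderedRing R]
    {F : Finset (Finset V)} {a b : V} (hab : a ≠ b) (hF : ∀ S ∈ F, a ∈ S → b ∉ S) {x : V → R}
    (ha : 0 ≤ x a) (hb : 0 ≤ x b) :
    ∑ S ∈ F, ∏ v ∈ S, x v ≤ ∑ S ∈ F, ∏ v ∈ S, shiftWeight x a b v ∨
      ∑ S ∈ F, ∏ v ∈ S, x v ≤ ∑ S ∈ F, ∏ v ∈ S, shiftWeight x b a v := by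
  have hx := sum_prod_update_update hF x (x a) (x b)
  simp only [update_eq_self] at hx
  have hba : shiftWeight x b a = update (update x a 0) b (x a + x b) := by
    rw [shiftWeight, update_comm hab.symm, add_comm]
  rw [shiftWeight, hba, hx, sum_prod_update_update hF, sum_prod_update_update hF]
  rcases le_total (∑ S ∈ F with b ∈ S, ∏ v ∈ S.erase b, x v)
    (∑ S ∈ F with a ∈ S, ∏ v ∈ S.erase a, x v) with h | h
  · left; linear_combination mul_le_mul_of_nonneg_left h hb
  · right; linear_combination mul_le_mul_of_nonneg_left h ha

end WeightShifting

section SetFamily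

variable {V : Type*} {F : Finset (Finset V)} {k : ℕ}

lemma sum_prod_le_sum_powersetCard_prod {R : Type*} [CommSemiring R] [PartialOrder R]
    [IsOrderedRing R] (hF : ∀ S ∈ F, #S = k) {s : Finset V} {x : V → R} (hx : ∀ v, 0 ≤ x v)
    (hxs : ∀ v ∉ s, x v = 0) :
    ∑ S ∈ F, ∏ v ∈ S, x v ≤ ∑ A ∈ s.powersetCard k, ∏ v ∈ A, x v := by
  classical
  have hvanish : ∀ S ∈ F, ¬ S ⊆ s → ∏ v ∈ S, x v = 0 := fun S _ hS => by
    obtain ⟨v, hvS, hvs⟩ := not_subset.1 hS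
    exact prod_eq_zero hvS (hxs v hvs)
  rw [← sum_filter_of_ne fun S hSF hne => by_contra fun hS => hne (hvanish S hSF hS)]
  refine sum_le_sum_of_subset_of_nonneg (fun S hS => ?_) fun A _ _ => prod_nonneg fun v _ => hx v
  obtain ⟨hSF, hSs⟩ := mem_filter.1 hS
  exact mem_powersetCard.2 ⟨hSs, hF S hSF⟩

theorem sum_prod_le_choose_mul_pow_of_card_support_le {R : Type*} [Field R] [LinearOrder R]
    [IsStrictOrderedRing R] [Fintype V] (hF : ∀ S ∈ F, #S = k) {x : V → R} (hx : ∀ v, 0 ≤ x v)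
    {m : ℕ} (hsupp : #{v | x v ≠ 0} ≤ m) (hmV : m ≤ Fintype.card V) :
    ∑ S ∈ F, ∏ v ∈ S, x v ≤ m.choose k * ((∑ v, x v) / m) ^ k := by
  obtain ⟨s, hsupp_s, -, hs⟩ :=
    exists_subsuperset_card_eq (subset_univ _) hsupp (by simpa using hmV)
  have hxs : ∀ v ∉ s, x v = 0 := fun v hv => by_contra fun h => hv (hsupp_s (by simpa using h))
  calc ∑ S ∈ F, ∏ v ∈ S, x v
      ≤ ∑ A ∈ s.powersetCard k, ∏ v ∈ A, x v := sum_prod_le_sum_powersetCard_prod hF hx hxs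
    _ ≤ (#s).choose k * ((∑ v ∈ s, x v) / #s) ^ k :=
        s.sum_powersetCard_prod_le_choose_mul_pow (fun v _ => hx v) k
    _ = m.choose k * ((∑ v, x v) / m) ^ k := by
        rw [hs, sum_subset (subset_univ s) fun v _ hv => hxs v hv]

end SetFamily

section Zykov

variable {V : Type*} [Fintype V]

open Classical in
noncomputable def indepFinsets (G : SimpleGraph V) (k : ℕ) : Finset (Finset V) :=
  univ.filter fun s : Finset V => s.card = k ∧ IsIndepFinset G s

lemma mem_indepFinsets {G : SimpleGraph V} {k : ℕ} {S : Finset V} :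
    S ∈ indepFinsets G k ↔ #S = k ∧ IsIndepFinset G S := by
  classical
  simp [indepFinsets]

theorem sum_indepFinsets_prod_le {R : Type*} [Field R] [LinearOrder R] [IsStrictOrderedRing R]
    (G : SimpleGraph V) {α : ℕ} (hα : ∀ s, IsIndepFinset G s → #s ≤ α)
    (hαV : α ≤ Fintype.card V) (k : ℕ) {x : V → R} (hx : ∀ v, 0 ≤ x v) :
    ∑ S ∈ indepFinsets G k, ∏ v ∈ S, x v ≤ α.choose k * ((∑ v, x v) / α) ^ k := by
  classical
  induction hN : #{v | x v ≠ 0} using Nat.strong_induction_on generalizing x with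
  | _ N ih =>
  by_cases hind : IsIndepFinset G {v | x v ≠ 0}
  · exact sum_prod_le_choose_mul_pow_of_card_support_le (fun S hS => (mem_indepFinsets.1 hS).1)
      hx (hα _ hind) hαV
  simp only [IsIndepFinset, mem_filter, mem_univ, true_and, not_forall, not_not] at hind
  obtain ⟨a, ha, b, hb, hadj⟩ := hind
  have hF : ∀ S ∈ indepFinsets G k, a ∈ S → b ∉ S :=
    fun S hS haS hbS => (mem_indepFinsets.1 hS).2 a haS b hbS hadj
  have shift : ∀ c d, c ≠ d → x c ≠ 0 → x d ≠ 0 →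
      ∑ S ∈ indepFinsets G k, ∏ v ∈ S, x v ≤
        ∑ S ∈ indepFinsets G k, ∏ v ∈ S, shiftWeight x c d v →
      ∑ S ∈ indepFinsets G k, ∏ v ∈ S, x v ≤ α.choose k * ((∑ v, x v) / α) ^ k :=
    fun c d hcd hc hd hle => hle.trans <| by
      simpa [sum_shiftWeight hcd] using
        ih _ (hN ▸ card_support_shiftWeight_lt hcd hc hd) (shiftWeight_nonneg hx c d) rfl
  rcases sum_prod_le_shiftWeight_or (G.ne_of_adj hadj) hF (hx a) (hx b) with h | h
  · exact shift a b (G.ne_of_adj hadj) ha hb h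
  · exact shift b a (G.ne_of_adj hadj).symm hb ha h

end Zykov

theorem stmt_6_general {V : Type*} [Fintype V] (G : SimpleGraph V) (n α : ℕ)
    (hn : n = Fintype.card V)
    (hα : IsGreatest {m | ∃ s : Finset V, IsIndepFinset G s ∧ s.card = m} α) :
    ∀ k : ℕ, k ≤ α →
      (indepCount G k : ℚ) ≤ (α.choose k : ℚ) * ((n : ℚ) / (α : ℚ)) ^ k := by
  intro k _
  obtain ⟨⟨s, -, hs⟩, hmax⟩ := hα
  have h := sum_indepFinsets_prod_le G (fun t ht => hmax ⟨t, ht, rfl⟩) (hs ▸ card_le_univ s) k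
    (x := fun _ => (1 : ℚ)) fun _ => zero_le_one
  simpa [indepFinsets, indepCount, hn] using h

theorem stmt_6 {V : Type*} [Fintype V] (G : SimpleGraph V) (n α : ℕ)
    (hn : n = Fintype.card V) (hn1 : 1 ≤ n) (hα1 : 1 ≤ α)
    (hα : IsGreatest {m | ∃ s : Finset V, IsIndepFinset G s ∧ s.card = m} α) :
    ∀ k : ℕ, k ≤ α →
      (indepCount G k : ℚ) ≤ (α.choose k : ℚ) * ((n : ℚ) / (α : ℚ)) ^ k :=
  stmt_6_general G n α hn hα
end

section
/- For any graph G with maximum independent set size α, the sequence (i_k / C(α,k))^{1/k} is weakly decreasing in k for 1 ≤ k ≤ α; equivalently, for all 1 ≤ k ≤ α-1, (i_k / C(α,k))^{k+1} ≥ (i_{k+1} / C(α,k+1))^{k}. -/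
open Finset

/-!
Give every vertex a nonnegative weight and let `i_j(w)` be the sum, over independent `j`-sets,
of the product of the weights, so that `i_j(1) = i_j`. Since no independent set contains both
ends of an edge `uv`, each `i_j(w)` is affine in the pair `(w u, w v)`. Keeping `i_k(w)` fixed
and moving along that segment to an endpoint does not decrease `i_{k+1}(w)`, and kills the
weight of `u` or of `v`. Repeating this, we reach weights supported on an independent set, of
size at most `α`; there `i_j(w)` is the `j`-th elementary symmetric function of at most `α`
nonnegative numbers, and the claim is Maclaurin's inequality for `α` numbers (pad with zeros).
Maclaurin's inequality follows from Newton's inequalities, proved by induction on the number of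
variables.
-/

section LogConcave

variable {R : Type*} [CommRing R] [LinearOrder R] [IsStrictOrderedRing R] {p : ℕ → R}

theorem mul_le_mul_of_logConcave (hnn : ∀ j, 0 ≤ p j) (hzero : ∀ j, p j = 0 → p (j + 1) = 0)
    (hlc : ∀ j, p j * p (j + 2) ≤ p (j + 1) ^ 2) (j : ℕ) :
    p j * p (j + 3) ≤ p (j + 1) * p (j + 2) := by
  rcases (hnn (j + 1)).eq_or_lt with h₁ | h₁
  · rw [hzero _ (hzero _ h₁.symm), mul_zero]
    exact mul_nonneg (hnn _) (hnn _)
  rcases (hnn (j + 2)).eq_or_lt with h₂ | h₂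
  · rw [hzero _ h₂.symm, mul_zero]
    exact mul_nonneg (hnn _) (hnn _)
  refine le_of_mul_le_mul_right ?_ (mul_pos h₁ h₂)
  calc p j * p (j + 3) * (p (j + 1) * p (j + 2))
      = (p j * p (j + 2)) * (p (j + 1) * p (j + 3)) := by ring
    _ ≤ p (j + 1) ^ 2 * p (j + 2) ^ 2 :=
      mul_le_mul (hlc j) (hlc (j + 1)) (mul_nonneg (hnn _) (hnn _)) (sq_nonneg _)
    _ = p (j + 1) * p (j + 2) * (p (j + 1) * p (j + 2)) := by ring

theorem pow_succ_le_pow_of_logConcave (h₀ : p 0 = 1) (hnn : ∀ j, 0 ≤ p j)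
    (hzero : ∀ j, p j = 0 → p (j + 1) = 0) (hlc : ∀ j, p j * p (j + 2) ≤ p (j + 1) ^ 2) :
    ∀ k, p (k + 1) ^ k ≤ p k ^ (k + 1)
  | 0 => by simp [h₀]
  | k + 1 => by
    rcases (hnn k).eq_or_lt with hk | hk
    · rw [hzero _ (hzero _ hk.symm), zero_pow k.succ_ne_zero]
      exact pow_nonneg (hnn _) _
    refine le_of_mul_le_mul_right ?_ (pow_pos hk (k + 1))
    calc p (k + 2) ^ (k + 1) * p k ^ (k + 1)
        = (p k * p (k + 2)) ^ (k + 1) := by ring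
      _ ≤ (p (k + 1) ^ 2) ^ (k + 1) := pow_le_pow_left₀ (mul_nonneg (hnn _) (hnn _)) (hlc k) _
      _ = p (k + 1) ^ (k + 2) * p (k + 1) ^ k := by ring
      _ ≤ p (k + 1) ^ (k + 2) * p k ^ (k + 1) :=
        mul_le_mul_of_nonneg_left (pow_succ_le_pow_of_logConcave h₀ hnn hzero hlc k)
          (pow_nonneg (hnn _) _)

end LogConcave

/-- With `a, b, c, d` the means `p (j - 1), …, p (j + 2)` of `M` numbers and `t` a further
number, the three factors are `M + 1` times the means `q j, q (j + 2), q (j + 1)` of all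
`M + 1` numbers (see `Multiset.esymmMean_cons_succ`). -/
theorem newton_step {R : Type*} [CommRing R] [LinearOrder R] [IsStrictOrderedRing R]
    {M j t a b c d : R} (hj : 0 ≤ j) (hjM : j + 1 ≤ M) (ht : 0 ≤ t)
    (h₁ : a * c ≤ b ^ 2) (h₂ : b * d ≤ c ^ 2) (h₃ : a * d ≤ b * c) :
    ((M - j + 1) * b + j * t * a) * ((M - j - 1) * d + (j + 2) * t * c)
      ≤ ((M - j) * c + (j + 1) * t * b) ^ 2 := by
  have hM : 0 ≤ M - j - 1 := by linarith
  have e₁ := mul_le_mul_of_nonneg_left h₂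
    (mul_nonneg (by linarith) hM : 0 ≤ (M - j + 1) * (M - j - 1))
  have e₂ := mul_le_mul_of_nonneg_left h₃ (by positivity : 0 ≤ j * (M - j - 1) * t)
  have e₃ := mul_le_mul_of_nonneg_left h₁ (by positivity : 0 ≤ j * (j + 2) * t ^ 2)
  linear_combination e₁ + e₂ + e₃ + sq_nonneg (c - t * b)

namespace Multiset

section Semiring

variable {R : Type*} [CommSemiring R]

theorem esymm_zero (s : Multiset R) : s.esymm 0 = 1 := by
  simp [esymm]

theorem esymm_eq_zero_of_card_lt {s : Multiset R} {n : ℕ} (h : card s < n) : s.esymm n = 0 := by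
  simp [esymm, powersetCard_eq_empty _ h]

theorem esymm_cons_succ_s7 (a : R) (s : Multiset R) (n : ℕ) :
    (a ::ₘ s).esymm (n + 1) = s.esymm (n + 1) + a * s.esymm n := by
  simp [esymm, map_map, prod_cons, sum_map_mul_left]

theorem esymm_replicate_zero_add (m : ℕ) (s : Multiset R) (n : ℕ) :
    (replicate m 0 + s).esymm n = s.esymm n := by
  induction m generalizing n with
  | zero => simp
  | succ m ih =>
    cases n with
    | zero => simp [esymm_zero]
    | succ n => simp [replicate_succ, esymm_cons_succ_s7, ih]

variable [PartialOrder R] [IsOrderedRing R]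

theorem esymm_nonneg {s : Multiset R} (hs : ∀ x ∈ s, 0 ≤ x) (n : ℕ) : 0 ≤ s.esymm n :=
  sum_nonneg fun _ hp ↦ by
    obtain ⟨t, ht, rfl⟩ := mem_map.1 hp
    exact prod_nonneg fun x hx ↦ hs x (mem_of_le (mem_powersetCard.1 ht).1 hx)

theorem esymm_succ_eq_zero {s : Multiset R} (hs : ∀ x ∈ s, 0 ≤ x) {n : ℕ} (h : s.esymm n = 0) :
    s.esymm (n + 1) = 0 := by
  induction s using Multiset.induction_on generalizing n with
  | empty => exact esymm_eq_zero_of_card_lt (by simp)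
  | cons a s ih =>
    have hs' : ∀ x ∈ s, 0 ≤ x := fun x hx ↦ hs x (mem_cons_of_mem hx)
    cases n with
    | zero =>
      have : Subsingleton R := subsingleton_of_zero_eq_one (h.symm.trans (esymm_zero _))
      exact Subsingleton.elim _ _
    | succ n =>
      rw [esymm_cons_succ_s7] at h ⊢
      have hn := ((add_eq_zero_iff_of_nonneg (esymm_nonneg hs' _)
        (mul_nonneg (hs a (mem_cons_self a s)) (esymm_nonneg hs' _))).1 h).1
      rw [hn, ih hs' hn, mul_zero, add_zero]

end Semiring

section Field

variable {R : Type*} [Field R]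

/-- For `n > card s` both numerator and denominator vanish, and the value is `0`. -/
noncomputable def esymmMean (s : Multiset R) (n : ℕ) : R :=
  s.esymm n / (card s).choose n

theorem esymmMean_zero (s : Multiset R) : s.esymmMean 0 = 1 := by
  simp [esymmMean, esymm_zero]

theorem esymmMean_eq_zero_of_card_lt {s : Multiset R} {n : ℕ} (h : card s < n) :
    s.esymmMean n = 0 := by
  rw [esymmMean, esymm_eq_zero_of_card_lt h, zero_div]

theorem esymmMean_replicate_zero_add (m : ℕ) (s : Multiset R) (n : ℕ) :
    (replicate m 0 + s).esymmMean n = s.esymm n / (m + card s).choose n := by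
  rw [esymmMean, esymm_replicate_zero_add, card_add, card_replicate]

theorem esymmMean_cons_succ [CharZero R] (a : R) (s : Multiset R) (n : ℕ) :
    ((card s : R) + 1) * (a ::ₘ s).esymmMean (n + 1)
      = ((card s : R) - n) * s.esymmMean (n + 1) + (n + 1) * a * s.esymmMean n := by
  set M := card s
  have h₁ : ((M : R) + 1) / (M + 1).choose (n + 1) = (n + 1) / M.choose n := by
    rcases le_or_gt n M with hn | hn
    · rw [div_eq_div_iff (Nat.cast_ne_zero.2 (Nat.choose_pos (by omega)).ne')
        (Nat.cast_ne_zero.2 (Nat.choose_pos hn).ne')]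
      linear_combination (by exact_mod_cast Nat.add_one_mul_choose_eq M n :
        ((M : R) + 1) * M.choose n = (M + 1).choose (n + 1) * (n + 1))
    · simp [Nat.choose_eq_zero_of_lt hn, Nat.choose_eq_zero_of_lt (by omega : M + 1 < n + 1)]
  have h₂ : s.esymm (n + 1) * (((M : R) + 1) / (M + 1).choose (n + 1))
      = s.esymm (n + 1) * (((M : R) - n) / M.choose (n + 1)) := by
    rcases lt_or_ge n M with hn | hn
    · congr 1
      rw [div_eq_div_iff (Nat.cast_ne_zero.2 (Nat.choose_pos (by omega)).ne')
        (Nat.cast_ne_zero.2 (Nat.choose_pos hn).ne'), ← Nat.cast_sub hn.le]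
      have := Nat.choose_mul_succ_eq M (n + 1)
      rw [Nat.add_sub_add_right] at this
      exact_mod_cast (mul_comm _ _).trans (this.trans (mul_comm _ _))
    · rw [esymm_eq_zero_of_card_lt (by omega), zero_mul, zero_mul]
  simp only [esymmMean, card_cons, esymm_cons_succ_s7]
  linear_combination h₂ + a * s.esymm n * h₁

end Field

section LinearOrderedField

variable {R : Type*} [Field R] [LinearOrder R] [IsStrictOrderedRing R] {s : Multiset R}

theorem esymmMean_nonneg (hs : ∀ x ∈ s, 0 ≤ x) (n : ℕ) : 0 ≤ s.esymmMean n :=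
  div_nonneg (esymm_nonneg hs n) (Nat.cast_nonneg _)

theorem esymmMean_succ_eq_zero (hs : ∀ x ∈ s, 0 ≤ x) {n : ℕ} (h : s.esymmMean n = 0) :
    s.esymmMean (n + 1) = 0 := by
  rcases div_eq_zero_iff.1 h with h | h
  · rw [esymmMean, esymm_succ_eq_zero hs h, zero_div]
  · exact esymmMean_eq_zero_of_card_lt
      (Nat.lt_succ_of_lt (Nat.choose_eq_zero_iff.1 (by exact_mod_cast h)))

theorem esymmMean_mul_le_sq (hs : ∀ x ∈ s, 0 ≤ x) (n : ℕ) :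
    s.esymmMean n * s.esymmMean (n + 2) ≤ s.esymmMean (n + 1) ^ 2 := by
  induction s using Multiset.induction_on generalizing n with
  | empty =>
    rw [esymmMean_eq_zero_of_card_lt (n := n + 2) (by simp), mul_zero]
    exact sq_nonneg _
  | cons a s ih =>
    have hs' : ∀ x ∈ s, 0 ≤ x := fun x hx ↦ hs x (mem_cons_of_mem hx)
    rcases lt_or_ge (card s) (n + 1) with hn | hn
    · rw [esymmMean_eq_zero_of_card_lt (n := n + 2) (by rw [card_cons]; omega), mul_zero]
      exact sq_nonneg _
    set p := s.esymmMean
    set q := (a ::ₘ s).esymmMean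
    set M : R := (card s : R)
    have hp := esymmMean_nonneg hs'
    have hrec : ∀ m : ℕ, (M + 1) * q (m + 1) = (M - m) * p (m + 1) + (m + 1) * a * p m :=
      esymmMean_cons_succ a s
    -- `r` stands for `p (n - 1)`, which only enters multiplied by `n`
    obtain ⟨r, hq, hr₁, hr₂⟩ : ∃ r, (M + 1) * q n = (M - n + 1) * p n + n * a * r ∧
        r * p (n + 1) ≤ p n ^ 2 ∧ r * p (n + 2) ≤ p n * p (n + 1) := by
      cases n with
      | zero => exact ⟨0, by simp [p, q, esymmMean_zero], by simpa using sq_nonneg _,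
          by simpa using mul_nonneg (hp 0) (hp 1)⟩
      | succ n =>
        refine ⟨p n, ?_, ih hs' n,
          mul_le_mul_of_logConcave hp (fun _ ↦ esymmMean_succ_eq_zero hs') (ih hs') n⟩
        rw [hrec]
        push_cast
        ring
    have hq₁ := hrec n
    have hq₂ := hrec (n + 1)
    push_cast at hq₂
    refine le_of_mul_le_mul_left ?_ (by positivity : (0 : R) < (M + 1) ^ 2)
    calc (M + 1) ^ 2 * (q n * q (n + 2))
        = ((M - n + 1) * p n + n * a * r)
            * ((M - n - 1) * p (n + 2) + (n + 2) * a * p (n + 1)) := by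
          linear_combination (M + 1) * q (n + 2) * hq
            + ((M - n + 1) * p n + n * a * r) * hq₂
      _ ≤ ((M - n) * p (n + 1) + (n + 1) * a * p n) ^ 2 :=
        newton_step (Nat.cast_nonneg n) (by exact_mod_cast hn : (n : R) + 1 ≤ card s)
          (hs a (mem_cons_self a s)) hr₁ (ih hs' n) hr₂
      _ = (M + 1) ^ 2 * q (n + 1) ^ 2 := by rw [← hq₁]; ring

theorem esymmMean_pow_le (hs : ∀ x ∈ s, 0 ≤ x) (k : ℕ) :
    s.esymmMean (k + 1) ^ k ≤ s.esymmMean k ^ (k + 1) :=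
  pow_succ_le_pow_of_logConcave (esymmMean_zero s) (esymmMean_nonneg hs)
    (fun _ ↦ esymmMean_succ_eq_zero hs) (esymmMean_mul_le_sq hs) k

theorem esymm_div_choose_pow_le (hs : ∀ x ∈ s, 0 ≤ x) {N : ℕ} (hN : card s ≤ N) (k : ℕ) :
    (s.esymm (k + 1) / N.choose (k + 1)) ^ k ≤ (s.esymm k / N.choose k) ^ (k + 1) := by
  have hs' : ∀ x ∈ replicate (N - card s) 0 + s, 0 ≤ x := by
    simp only [mem_add, mem_replicate]
    rintro x (⟨-, rfl⟩ | hx)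
    exacts [le_rfl, hs x hx]
  have := esymmMean_pow_le hs' k
  rwa [esymmMean_replicate_zero_add, esymmMean_replicate_zero_add, Nat.sub_add_cancel hN] at this

end LinearOrderedField

end Multiset

theorem exists_endpoint_mul_add_mul_le {R : Type*} [Field R] [LinearOrder R]
    [IsStrictOrderedRing R] {a b c d x y : R} (ha : 0 ≤ a) (hb : 0 ≤ b) (hac : a = 0 → c = 0)
    (hbd : b = 0 → d = 0) (hx : 0 ≤ x) (hy : 0 ≤ y) :
    ∃ x' y', 0 ≤ x' ∧ 0 ≤ y' ∧ (x' = 0 ∨ y' = 0) ∧ a * x' + b * y' = a * x + b * y ∧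
      c * x + d * y ≤ c * x' + d * y' := by
  rcases ha.eq_or_lt with rfl | ha
  · exact ⟨0, y, le_rfl, hy, .inl rfl, by simp, by simp [hac rfl]⟩
  rcases hb.eq_or_lt with rfl | hb
  · exact ⟨x, 0, hx, le_rfl, .inr rfl, by simp, by simp [hbd rfl]⟩
  rcases le_total (d * a) (c * b) with h | h
  · refine ⟨x + b / a * y, 0, by positivity, le_rfl, .inr rfl, by field_simp; ring, ?_⟩
    calc c * x + d * y ≤ c * x + c * b / a * y := by gcongr; exact (le_div_iff₀ ha).2 h
      _ = c * (x + b / a * y) + d * 0 := by ring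
  · refine ⟨0, y + a / b * x, le_rfl, by positivity, .inl rfl, by field_simp; ring, ?_⟩
    calc c * x + d * y ≤ d * a / b * x + d * y := by gcongr; exact (le_div_iff₀ hb).2 h
      _ = c * 0 + d * (y + a / b * x) := by ring

section WeightedIndepCount

open Function Classical

variable {V : Type*} {G : SimpleGraph V}

theorem IsIndepFinset.mono {s t : Finset V} (ht : IsIndepFinset G t) (h : s ⊆ t) :
    IsIndepFinset G s :=
  fun a ha b hb ↦ ht a (h ha) b (h hb)

variable [Fintype V] {R : Type*}

noncomputable def indepFinsetsOfCard (G : SimpleGraph V) (j : ℕ) : Finset (Finset V) :=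
  univ.filter fun s : Finset V => s.card = j ∧ IsIndepFinset G s

noncomputable def weightedIndepCount [CommSemiring R] (G : SimpleGraph V) (j : ℕ)
    (w : V → R) : R :=
  ∑ s ∈ indepFinsetsOfCard G j, ∏ v ∈ s, w v

/-- The partial derivative of `weightedIndepCount G j w` with respect to `w u`. -/
noncomputable def weightedIndepCountDeriv [CommSemiring R] (G : SimpleGraph V) (j : ℕ) (u : V)
    (w : V → R) : R :=
  ∑ s ∈ (indepFinsetsOfCard G j).filter (u ∈ ·), ∏ v ∈ s.erase u, w v

theorem mem_indepFinsetsOfCard {j : ℕ} {s : Finset V} :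
    s ∈ indepFinsetsOfCard G j ↔ s.card = j ∧ IsIndepFinset G s := by
  simp [indepFinsetsOfCard]

theorem weightedIndepCount_one [CommSemiring R] (G : SimpleGraph V) (j : ℕ) :
    weightedIndepCount G j (fun _ ↦ (1 : R)) = indepCount G j := by
  simp [weightedIndepCount, indepCount, indepFinsetsOfCard]

section CommSemiring

variable [CommSemiring R] {j : ℕ}

theorem weightedIndepCount_update (G : SimpleGraph V) (j : ℕ) (u : V) (w : V → R) (x : R) :
    weightedIndepCount G j (update w u x)
      = weightedIndepCount G j (update w u 0) + x * weightedIndepCountDeriv G j u w := by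
  have key : ∀ x : R, weightedIndepCount G j (update w u x) = x * weightedIndepCountDeriv G j u w
      + ∑ s ∈ (indepFinsetsOfCard G j).filter (u ∉ ·), ∏ v ∈ s, w v := by
    intro x
    rw [weightedIndepCount, ← sum_filter_add_sum_filter_not _ (u ∈ ·), weightedIndepCountDeriv,
      mul_sum]
    congr 1
    · refine sum_congr rfl fun s hs ↦ ?_
      rw [prod_update_of_mem (mem_filter.1 hs).2, sdiff_singleton_eq_erase]
    · exact sum_congr rfl fun s hs ↦ prod_update_of_notMem (mem_filter.1 hs).2 _ _
  rw [key, key, zero_mul, zero_add, add_comm]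

theorem weightedIndepCountDeriv_update_of_adj {u v : V} (huv : G.Adj u v) (w : V → R) (y : R) :
    weightedIndepCountDeriv G j u (update w v y) = weightedIndepCountDeriv G j u w := by
  refine sum_congr rfl fun s hs ↦ prod_update_of_notMem (fun hv ↦ ?_) _ _
  obtain ⟨hs, hu⟩ := mem_filter.1 hs
  exact (mem_indepFinsetsOfCard.1 hs).2 u hu v (mem_of_mem_erase hv) huv

theorem weightedIndepCount_update_update {u v : V} (huv : G.Adj u v) (w : V → R) (x y : R) :
    weightedIndepCount G j (update (update w u x) v y)
      = weightedIndepCount G j (update (update w u 0) v 0)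
        + x * weightedIndepCountDeriv G j u w + y * weightedIndepCountDeriv G j v w := by
  rw [weightedIndepCount_update, weightedIndepCountDeriv_update_of_adj huv.symm,
    update_comm huv.ne, weightedIndepCount_update, weightedIndepCountDeriv_update_of_adj huv,
    update_comm huv.ne.symm]

theorem weightedIndepCount_eq_esymm {σ : Finset V} (hσ : IsIndepFinset G σ) {w : V → R}
    (hw : ∀ x ∉ σ, w x = 0) (j : ℕ) :
    weightedIndepCount G j w = (σ.val.map w).esymm j := by
  rw [Finset.esymm_map_val, weightedIndepCount]
  refine (sum_subset (fun t ht ↦ ?_) (fun t ht hnot ↦ ?_)).symm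
  · obtain ⟨hts, htj⟩ := mem_powersetCard.1 ht
    exact mem_indepFinsetsOfCard.2 ⟨htj, hσ.mono hts⟩
  · obtain ⟨x, hxt, hxσ⟩ := not_subset.1 fun h ↦
      hnot (mem_powersetCard.2 ⟨h, (mem_indepFinsetsOfCard.1 ht).1⟩)
    exact prod_eq_zero hxt (hw x hxσ)

end CommSemiring

variable [Field R] [LinearOrder R] [IsStrictOrderedRing R] {w : V → R}

theorem weightedIndepCount_nonneg (hw : ∀ x, 0 ≤ w x) (j : ℕ) :
    0 ≤ weightedIndepCount G j w :=
  sum_nonneg fun _ _ ↦ prod_nonneg fun v _ ↦ hw v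

theorem weightedIndepCountDeriv_nonneg (hw : ∀ x, 0 ≤ w x) (j : ℕ) (u : V) :
    0 ≤ weightedIndepCountDeriv G j u w :=
  sum_nonneg fun _ _ ↦ prod_nonneg fun v _ ↦ hw v

theorem weightedIndepCountDeriv_succ_eq_zero (hw : ∀ x, 0 ≤ w x) {k : ℕ} (hk : 1 ≤ k) {u : V}
    (h : weightedIndepCountDeriv G k u w = 0) : weightedIndepCountDeriv G (k + 1) u w = 0 := by
  have hterm := (sum_eq_zero_iff_of_nonneg fun s _ ↦ prod_nonneg fun v _ ↦ hw v).1 h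
  refine sum_eq_zero fun J hJ ↦ ?_
  obtain ⟨hJ, huJ⟩ := mem_filter.1 hJ
  obtain ⟨hcard, hind⟩ := mem_indepFinsetsOfCard.1 hJ
  obtain ⟨x, hx⟩ : (J.erase u).Nonempty := by
    rw [← card_pos, card_erase_of_mem huJ]
    omega
  have hI : J.erase x ∈ (indepFinsetsOfCard G k).filter (u ∈ ·) := by
    refine mem_filter.2 ⟨mem_indepFinsetsOfCard.2 ⟨?_, hind.mono (erase_subset _ _)⟩,
      mem_erase.2 ⟨(ne_of_mem_erase hx).symm, huJ⟩⟩
    rw [card_erase_of_mem (mem_of_mem_erase hx)]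
    omega
  rw [← mul_prod_erase _ _ hx, erase_right_comm, hterm _ hI, mul_zero]

theorem exists_weightedIndepCount_eq_and_le {u v : V} (huv : G.Adj u v) {k : ℕ} (hk : 1 ≤ k)
    (hw : ∀ x, 0 ≤ w x) :
    ∃ w' : V → R, (∀ x, 0 ≤ w' x) ∧ (w' u = 0 ∨ w' v = 0) ∧ (∀ x, x ≠ u → x ≠ v → w' x = w x) ∧
      weightedIndepCount G k w' = weightedIndepCount G k w ∧
      weightedIndepCount G (k + 1) w ≤ weightedIndepCount G (k + 1) w' := by
  obtain ⟨x, y, hx, hy, hxy, hk₀, hk₁⟩ := exists_endpoint_mul_add_mul_le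
    (weightedIndepCountDeriv_nonneg hw k u) (weightedIndepCountDeriv_nonneg hw k v)
    (weightedIndepCountDeriv_succ_eq_zero (G := G) hw hk)
    (weightedIndepCountDeriv_succ_eq_zero (G := G) hw hk) (hw u) (hw v)
  have hw_eq (j : ℕ) : weightedIndepCount G j w
      = weightedIndepCount G j (update (update w u 0) v 0)
        + w u * weightedIndepCountDeriv G j u w + w v * weightedIndepCountDeriv G j v w := by
    simpa using weightedIndepCount_update_update (j := j) huv w (w u) (w v)
  refine ⟨update (update w u x) v y, fun z ↦ ?_, by simpa [huv.ne] using hxy,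
    fun z hzu hzv ↦ by simp [hzu, hzv], ?_, ?_⟩
  · simp only [update_apply]
    split_ifs
    exacts [hy, hx, hw z]
  · rw [weightedIndepCount_update_update huv, hw_eq k]
    linear_combination hk₀
  · rw [weightedIndepCount_update_update huv, hw_eq (k + 1)]
    linarith

theorem weightedIndepCount_div_choose_pow_le {α k : ℕ}
    (hα : ∀ s, IsIndepFinset G s → s.card ≤ α) (hk : 1 ≤ k) (hw : ∀ x, 0 ≤ w x) :
    (weightedIndepCount G (k + 1) w / α.choose (k + 1)) ^ k
      ≤ (weightedIndepCount G k w / α.choose k) ^ (k + 1) := by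
  suffices ∀ σ : Finset V, ∀ w : V → R, (∀ x, 0 ≤ w x) → (∀ x ∉ σ, w x = 0) →
      (weightedIndepCount G (k + 1) w / α.choose (k + 1)) ^ k
        ≤ (weightedIndepCount G k w / α.choose k) ^ (k + 1) from
    this univ w hw (by simp)
  intro σ
  induction σ using Finset.strongInduction with
  | H σ ih =>
  intro w hw hσ
  by_cases hind : IsIndepFinset G σ
  · rw [weightedIndepCount_eq_esymm hind hσ, weightedIndepCount_eq_esymm hind hσ]
    refine Multiset.esymm_div_choose_pow_le ?_ (by simpa using hα σ hind) k
    simpa using fun x _ ↦ hw x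
  obtain ⟨u, hu, v, hv, huv⟩ : ∃ u ∈ σ, ∃ v ∈ σ, G.Adj u v := by
    simpa [IsIndepFinset] using hind
  obtain ⟨w', hw', hzero, hrest, hk₀, hk₁⟩ := exists_weightedIndepCount_eq_and_le huv hk hw
  have hvanish : ∀ z ∈ σ, w' z = 0 → ∀ x ∉ σ.erase z, w' x = 0 := by
    intro z hz hz₀ x hx
    by_cases hxz : x = z
    · rwa [hxz]
    have hxσ : x ∉ σ := fun h ↦ hx (mem_erase.2 ⟨hxz, h⟩)
    rw [hrest x (fun h ↦ hxσ (h ▸ hu)) (fun h ↦ hxσ (h ▸ hv)), hσ x hxσ]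
  obtain ⟨τ, hτ, hw'τ⟩ : ∃ τ ⊂ σ, ∀ x ∉ τ, w' x = 0 := by
    rcases hzero with h | h
    exacts [⟨_, erase_ssubset hu, hvanish u hu h⟩, ⟨_, erase_ssubset hv, hvanish v hv h⟩]
  have := weightedIndepCount_nonneg (G := G) hw (k + 1)
  calc (weightedIndepCount G (k + 1) w / α.choose (k + 1)) ^ k
      ≤ (weightedIndepCount G (k + 1) w' / α.choose (k + 1)) ^ k := by gcongr
    _ ≤ (weightedIndepCount G k w' / α.choose k) ^ (k + 1) := ih τ hτ w' hw' hw'τ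
    _ = (weightedIndepCount G k w / α.choose k) ^ (k + 1) := by rw [hk₀]

end WeightedIndepCount

theorem stmt_7 {V : Type*} [Fintype V] (G : SimpleGraph V) (α : ℕ)
    (hα : IsGreatest {m | ∃ s : Finset V, IsIndepFinset G s ∧ s.card = m} α) :
    ∀ k : ℕ, 1 ≤ k → k ≤ α - 1 →
      ((indepCount G (k + 1) : ℚ) / (α.choose (k + 1) : ℚ)) ^ k ≤
        ((indepCount G k : ℚ) / (α.choose k : ℚ)) ^ (k + 1) := by
  intro k hk _
  simpa only [weightedIndepCount_one] using
    weightedIndepCount_div_choose_pow_le (fun s hs ↦ hα.2 ⟨s, hs, rfl⟩) hk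
      (fun _ ↦ zero_le_one (α := ℚ))
end
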